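/- arXiv:1510.01868 — 3 statements merged into one kernel-verified Lean document; each statement's English description precedes it below -/
import Mathlib

section
/- Let U be a finite semigroup, S a subsemigroup, x ∈ S, x' ∈ U with x x' x = x, and s, t ∈ Stab_U(L_x^U). Then the following are equivalent: (a) s and t induce the same map on L_x^U; (b) ys = yt for all y ∈ L_x^U; (c) there exists y ∈ L_x^U with ys = yt. -/
variable {U : Type*}

/-- Green's R-relation relative to a set `T` of multipliers (`T = S` gives `R^S`,
`T = Set.univ` gives `R^U`): `x R y` iff `x ∈ y T^1` and `y ∈ x T^1`. -/
def GreenR [Mul U] (T : Set U) (x y : U) : Prop :=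
  (x = y ∨ ∃ a ∈ T, x * a = y) ∧ (y = x ∨ ∃ a ∈ T, y * a = x)

/-- Green's L-relation relative to a set `T` of multipliers. -/
def GreenL [Mul U] (T : Set U) (x y : U) : Prop :=
  (x = y ∨ ∃ a ∈ T, a * x = y) ∧ (y = x ∨ ∃ a ∈ T, a * y = x)

/-- Green's H-relation relative to `T`. -/
def GreenH [Mul U] (T : Set U) (x y : U) : Prop :=
  GreenL T x y ∧ GreenR T x y

/-- Green's D-relation relative to `T` (for finite semigroups, `D = R ∘ L`). -/
def GreenD [Mul U] (T : Set U) (x y : U) : Prop :=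
  ∃ z, GreenR T x z ∧ GreenL T z y

/-- The `L^U`-class of `x` in the ambient semigroup `U`. -/
def Lcl [Mul U] (x : U) : Set U := {y | GreenL Set.univ x y}

/-- The `R^U`-class of `x` in the ambient semigroup `U`. -/
def RclU [Mul U] (x : U) : Set U := {y | GreenR Set.univ x y}

/-- The `R`-class of `x` relative to multipliers from `T`. -/
def Rcl [Mul U] (T : Set U) (x : U) : Set U := {y | GreenR T x y}

/-- `L_a^U` reaches `L_b^U` under the right action of `T^1` on `L^U`-classes
given by `L_a · s = L_{a s}`. -/
def reachC [Mul U] (T : Set U) (a b : U) : Prop :=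
  Lcl a = Lcl b ∨ ∃ s ∈ T, Lcl (a * s) = Lcl b

/-- `R_a^U` reaches `R_b^U` under the left action of `T^1` on `R^U`-classes. -/
def reachCL [Mul U] (T : Set U) (a b : U) : Prop :=
  RclU a = RclU b ∨ ∃ s ∈ T, RclU (s * a) = RclU b

/-- The right action of `S^1` (identity adjoined, encoded as `Option ↥S`) on `U`. -/
def act1 [Mul U] (S : Subsemigroup U) (u : U) (o : Option ↥S) : U :=
  o.elim u (fun s => u * (s : U))

/-- The left action of `S^1` on `U`. -/
def act1L [Mul U] (S : Subsemigroup U) (o : Option ↥S) (u : U) : U :=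
  o.elim u (fun s => (s : U) * u)

/-- The stabiliser `Stab_S(L_x^U)` of the `L^U`-class of `x` under the right
action of `S^1` on subsets of `U`. -/
def StabOfL [Mul U] (S : Subsemigroup U) (x : U) : Set (Option ↥S) :=
  {o | (fun y => act1 S y o) '' Lcl x = Lcl x}

/-- The stabiliser `Stab_S(R_x^U)` of the `R^U`-class of `x` under the left
action of `S^1` on subsets of `U`. -/
def StabOfR [Mul U] (S : Subsemigroup U) (x : U) : Set (Option ↥S) :=
  {o | (fun y => act1L S o y) '' RclU x = RclU x}

/-- The right action of `U^1` (encoded as `Option U`) on `U`. -/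
def act1U [Mul U] (u : U) (o : Option U) : U := o.elim u (fun s => u * s)

/-- The stabiliser `Stab_U(L_x^U)` under the right action of `U^1` on subsets of `U`. -/
def StabU [Mul U] (x : U) : Set (Option U) :=
  {o | (fun y => act1U y o) '' Lcl x = Lcl x}

lemma act1U_mul_left [Semigroup U] (a y : U) (o : Option U) :
    act1U (a * y) o = a * act1U y o := by
  cases o <;> simp [act1U, mul_assoc]

lemma self_mem_Lcl [Mul U] (x : U) : x ∈ Lcl x :=
  ⟨Or.inl rfl, Or.inl rfl⟩

lemma eq_or_exists_mul_eq_of_mem_Lcl [Semigroup U] {x y z : U} (hy : y ∈ Lcl x)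
    (hz : z ∈ Lcl x) : z = y ∨ ∃ a, a * y = z := by
  obtain ⟨hxz, -⟩ := hz
  obtain ⟨-, hyx⟩ := hy
  rcases hxz with rfl | ⟨a, -, rfl⟩ <;> rcases hyx with rfl | ⟨b, -, rfl⟩
  · exact Or.inl rfl
  · exact Or.inr ⟨b, rfl⟩
  · exact Or.inr ⟨a, rfl⟩
  · exact Or.inr ⟨a * b, mul_assoc a b y⟩

/-- Agreement at one point of `L_x^U` spreads to all of it, since every other point is a
left multiple of that one and the right action commutes with left multiplication. -/
lemma act1U_eq_of_mem_Lcl [Semigroup U] {x y z : U} {o p : Option U} (hy : y ∈ Lcl x)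
    (hz : z ∈ Lcl x) (h : act1U y o = act1U y p) : act1U z o = act1U z p := by
  rcases eq_or_exists_mul_eq_of_mem_Lcl hy hz with rfl | ⟨a, rfl⟩
  · exact h
  · rw [act1U_mul_left, act1U_mul_left, h]

theorem stab_same_map_tfae_general [Semigroup U] (x : U) (o p : Option U) :
    (((fun y : ↥(Lcl x) => act1U (y : U) o) = fun y : ↥(Lcl x) => act1U (y : U) p) ↔
      (∀ y ∈ Lcl x, act1U y o = act1U y p)) ∧
    ((∀ y ∈ Lcl x, act1U y o = act1U y p) ↔ (∃ y ∈ Lcl x, act1U y o = act1U y p)) :=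
  ⟨⟨fun h y hy => congrFun h ⟨y, hy⟩, fun h => funext fun y => h y y.2⟩,
    ⟨fun h => ⟨x, self_mem_Lcl x, h x (self_mem_Lcl x)⟩,
      fun ⟨_, hy, h⟩ _ hz => act1U_eq_of_mem_Lcl hy hz h⟩⟩

/-- For `s, t ∈ Stab_U(L_x^U)` the following are equivalent: (a) `s` and `t`
induce the same map on `L_x^U`; (b) `y s = y t` for all `y ∈ L_x^U`; (c) there
exists `y ∈ L_x^U` with `y s = y t`. -/
theorem stab_same_map_tfae [Semigroup U] [Finite U] (S : Subsemigroup U)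
    (x : U) (hx : x ∈ S) (x' : U) (hx' : x * x' * x = x)
    (o p : Option U) (ho : o ∈ StabU x) (hp : p ∈ StabU x) :
    (((fun y : ↥(Lcl x) => act1U (y : U) o) = fun y : ↥(Lcl x) => act1U (y : U) p) ↔
      (∀ y ∈ Lcl x, act1U y o = act1U y p)) ∧
    ((∀ y ∈ Lcl x, act1U y o = act1U y p) ↔ (∃ y ∈ Lcl x, act1U y o = act1U y p)) :=
  stab_same_map_tfae_general x o p
end

section
/- Let U be a finite semigroup, S a subsemigroup, x ∈ S with x' ∈ U satisfying x x' x = x. Then the H^S-class of x is a group under the multiplication s * t = s x' t with identity x, and this group is isomorphic to the Schützenberger group of H_x^S (the quotient of Stab_S(H_x^S) by the kernel of its right-multiplication action on H_x^S). -/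
variable {U : Type*}

/-- The stabiliser of the `H^S`-class of `x` under the right action of `S^1`
on subsets of `U`. -/
def StabOfH [Mul U] (S : Subsemigroup U) (x : U) : Set (Option ↥S) :=
  {o | (fun y => act1 S y o) '' {z | GreenH (S : Set U) x z} = {z | GreenH (S : Set U) x z}}

/-! Every element of `H = H_x^S` is `x` or `x f` with `f ∈ S`, and also `x` or `u x`. If `x a ∈ H`,
right multiplication by `a` maps `H` into itself (Green's lemma) and injectively, since
`x a b = x` for some `b ∈ S¹` forces `y a b = y` on `S¹ x`; as `U` is finite it permutes `H`.
With `x x'` a left and `x' x` a right identity on `H`, this makes `H` closed under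
`s t = s x' t` with left, hence two-sided, inverses, and shows that `o ∈ Stab_S(H)` acts on
`y = u x` by `y ↦ u (x o)`, so `o ↦ x o` is an isomorphism of the Schützenberger group
onto `H`. -/

section Green

variable [Semigroup U] {T : Set U} {x y e : U}

theorem GreenH.refl (T : Set U) (x : U) : GreenH T x x :=
  ⟨⟨.inl rfl, .inl rfl⟩, ⟨.inl rfl, .inl rfl⟩⟩

theorem eq_or_exists_mul_left_trans {S : Subsemigroup U} {z : U}
    (hxy : x = y ∨ ∃ a ∈ (S : Set U), a * x = y) (hyz : y = z ∨ ∃ b ∈ (S : Set U), b * y = z) :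
    x = z ∨ ∃ c ∈ (S : Set U), c * x = z := by
  rcases hxy with rfl | ⟨a, ha, rfl⟩
  · exact hyz
  · rcases hyz with rfl | ⟨b, hb, rfl⟩
    · exact .inr ⟨a, ha, rfl⟩
    · exact .inr ⟨b * a, S.mul_mem hb ha, mul_assoc b a x⟩

theorem eq_or_exists_mul_right_trans {S : Subsemigroup U} {z : U}
    (hxy : x = y ∨ ∃ a ∈ (S : Set U), x * a = y) (hyz : y = z ∨ ∃ b ∈ (S : Set U), y * b = z) :
    x = z ∨ ∃ c ∈ (S : Set U), x * c = z := by
  rcases hxy with rfl | ⟨a, ha, rfl⟩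
  · exact hyz
  · rcases hyz with rfl | ⟨b, hb, rfl⟩
    · exact .inr ⟨a, ha, rfl⟩
    · exact .inr ⟨a * b, S.mul_mem ha hb, (mul_assoc x a b).symm⟩

theorem GreenL.trans {S : Subsemigroup U} {z : U} (hxy : GreenL (S : Set U) x y)
    (hyz : GreenL (S : Set U) y z) : GreenL (S : Set U) x z :=
  ⟨eq_or_exists_mul_left_trans hxy.1 hyz.1, eq_or_exists_mul_left_trans hyz.2 hxy.2⟩

theorem GreenR.trans {S : Subsemigroup U} {z : U} (hxy : GreenR (S : Set U) x y)
    (hyz : GreenR (S : Set U) y z) : GreenR (S : Set U) x z :=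
  ⟨eq_or_exists_mul_right_trans hxy.1 hyz.1, eq_or_exists_mul_right_trans hyz.2 hxy.2⟩

theorem GreenL.mul_right (h : GreenL T x y) (a : U) : GreenL T (x * a) (y * a) := by
  obtain ⟨hxy, hyx⟩ := h
  constructor
  · rcases hxy with rfl | ⟨u, hu, rfl⟩
    exacts [.inl rfl, .inr ⟨u, hu, (mul_assoc u x a).symm⟩]
  · rcases hyx with rfl | ⟨u, hu, rfl⟩
    exacts [.inl rfl, .inr ⟨u, hu, (mul_assoc u y a).symm⟩]

theorem GreenR.mul_left (h : GreenR T x y) (u : U) : GreenR T (u * x) (u * y) := by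
  obtain ⟨hxy, hyx⟩ := h
  constructor
  · rcases hxy with rfl | ⟨a, ha, rfl⟩
    exacts [.inl rfl, .inr ⟨a, ha, mul_assoc u x a⟩]
  · rcases hyx with rfl | ⟨a, ha, rfl⟩
    exacts [.inl rfl, .inr ⟨a, ha, mul_assoc u y a⟩]

theorem GreenL.mul_eq_self_of_mul_eq_self (h : GreenL T x y) (he : x * e = x) :
    y * e = y := by
  rcases h.1 with rfl | ⟨u, -, rfl⟩
  exacts [he, by rw [mul_assoc, he]]

theorem GreenR.mul_eq_self_of_mul_eq_self (h : GreenR T x y) (he : e * x = x) :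
    e * y = y := by
  rcases h.1 with rfl | ⟨a, -, rfl⟩
  exacts [he, by rw [← mul_assoc, he]]

/-- Green's lemma, in the form used for `H`-classes. -/
theorem GreenH.mul_right {S : Subsemigroup U} {a : U}
    (hxa : GreenH (S : Set U) x (x * a)) (hy : GreenH (S : Set U) x y) :
    GreenH (S : Set U) x (y * a) := by
  have hya : GreenR (S : Set U) y (y * a) := by
    rcases hy.1.1 with rfl | ⟨u, -, rfl⟩
    · exact hxa.2
    · simpa only [mul_assoc] using hxa.2.mul_left u
  exact ⟨hxa.1.trans (hy.1.mul_right a), hy.2.trans hya⟩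

theorem GreenH.injOn_mul_right {a : U} (hxa : GreenH T x (x * a)) :
    Set.InjOn (· * a) {z | GreenH T x z} := by
  intro y hy z hz (h : y * a = z * a)
  rcases hxa.2.2 with hxa | ⟨b, -, hxab⟩
  · rwa [hy.1.mul_eq_self_of_mul_eq_self hxa, hz.1.mul_eq_self_of_mul_eq_self hxa] at h
  · have hab : x * (a * b) = x := by rw [← mul_assoc, hxab]
    rw [← hy.1.mul_eq_self_of_mul_eq_self hab, ← hz.1.mul_eq_self_of_mul_eq_self hab,
      ← mul_assoc, h, mul_assoc]

theorem GreenH.bijOn_mul_right [Finite U] {S : Subsemigroup U} {a : U}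
    (hxa : GreenH (S : Set U) x (x * a)) :
    Set.BijOn (· * a) {z | GreenH (S : Set U) x z} {z | GreenH (S : Set U) x z} :=
  ((Set.toFinite {z | GreenH (S : Set U) x z}).injOn_iff_bijOn_of_mapsTo
    fun _ hy => hxa.mul_right hy).mp hxa.injOn_mul_right

end Green

section Sandwich

variable [Semigroup U] {S : Subsemigroup U} {x x' s t : U}

theorem GreenR.sandwich_unit_left {T : Set U} (hx' : x * x' * x = x) (hs : GreenR T x s) :
    x * x' * s = s :=
  hs.mul_eq_self_of_mul_eq_self hx'

theorem GreenL.sandwich_unit_right {T : Set U} (hx' : x * x' * x = x) (hs : GreenL T x s) :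
    s * x' * x = s := by
  rw [mul_assoc]
  exact hs.mul_eq_self_of_mul_eq_self (by rw [← mul_assoc, hx'])

theorem GreenH.sandwich_mem (hx' : x * x' * x = x) (hs : GreenH (S : Set U) x s)
    (ht : GreenH (S : Set U) x t) : GreenH (S : Set U) x (s * x' * t) := by
  rcases ht.2.1 with rfl | ⟨f, -, rfl⟩
  · rwa [hs.1.sandwich_unit_right hx']
  · rw [← mul_assoc, hs.1.sandwich_unit_right hx']
    exact ht.mul_right hs

theorem GreenH.exists_sandwich_left_inv [Finite U] (hx' : x * x' * x = x)
    (hs : GreenH (S : Set U) x s) : ∃ t, GreenH (S : Set U) x t ∧ t * x' * s = x := by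
  rcases hs.2.1 with rfl | ⟨f, -, rfl⟩
  · exact ⟨x, .refl _ x, hx'⟩
  · obtain ⟨t, ht, htf⟩ := hs.bijOn_mul_right.surjOn (GreenH.refl _ x)
    exact ⟨t, ht, by rw [← mul_assoc, ht.1.sandwich_unit_right hx']; exact htf⟩

/-- A left inverse `t` of `s` is also a right inverse: multiply `s x' t` on the left by
`x = u x' t`, with `u` a left inverse of `t`. -/
theorem GreenH.exists_sandwich_inv [Finite U] (hx' : x * x' * x = x)
    (hs : GreenH (S : Set U) x s) :
    ∃ t, GreenH (S : Set U) x t ∧ s * x' * t = x ∧ t * x' * s = x := by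
  obtain ⟨t, ht, hts⟩ := hs.exists_sandwich_left_inv hx'
  obtain ⟨u, -, hut⟩ := ht.exists_sandwich_left_inv hx'
  refine ⟨t, ht, ?_, hts⟩
  calc s * x' * t = x * x' * (s * x' * t) :=
        ((hs.sandwich_mem hx' ht).2.sandwich_unit_left hx').symm
    _ = u * x' * ((t * x' * s) * x' * t) := by rw [← hut]; simp only [mul_assoc]
    _ = x := by rw [hts, ht.2.sandwich_unit_left hx', hut]

end Sandwich

section Schutzenberger

variable [Semigroup U] {S : Subsemigroup U} {x y : U}

theorem act1_mul_left (u v : U) (o : Option ↥S) : act1 S (u * v) o = u * act1 S v o := by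
  cases o with
  | none => rfl
  | some s => exact mul_assoc u v s

theorem GreenL.act1_eq_act1 {T : Set U} {o p : Option ↥S} (hy : GreenL T x y)
    (h : act1 S x o = act1 S x p) : act1 S y o = act1 S y p := by
  rcases hy.1 with rfl | ⟨u, -, rfl⟩
  · exact h
  · rw [act1_mul_left, act1_mul_left, h]

theorem GreenL.act1_eq_sandwich {T : Set U} {x' : U} (hx' : x * x' * x = x)
    (hy : GreenL T x y) (p : Option ↥S) : act1 S y p = y * x' * act1 S x p := by
  have hyx := hy.sandwich_unit_right hx'
  cases p with
  | none => exact hyx.symm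
  | some s => rw [act1, act1, Option.elim_some, Option.elim_some, ← mul_assoc, hyx]

theorem act1_mem_of_mem_stabOfH {o : Option ↥S} (ho : o ∈ StabOfH S x) :
    GreenH (S : Set U) x (act1 S x o) :=
  ho.subset ⟨x, GreenH.refl _ x, rfl⟩

theorem GreenH.exists_mem_stabOfH_act1_eq [Finite U] {g : U} (hg : GreenH (S : Set U) x g) :
    ∃ o ∈ StabOfH S x, act1 S x o = g := by
  rcases hg.2.1 with rfl | ⟨f, hf, rfl⟩
  · exact ⟨none, Set.image_id _, rfl⟩
  · exact ⟨some ⟨f, hf⟩, hg.bijOn_mul_right.image_eq, rfl⟩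

end Schutzenberger

theorem hclass_group_iso_schutzenberger_general [Semigroup U] [Finite U]
    (S : Subsemigroup U) (x : U) (x' : U) (hx' : x * x' * x = x) :
    -- `H_x^S` is a group under `s * t = s x' t` with identity `x`
    (x ∈ {z | GreenH (S : Set U) x z} ∧
     (∀ s ∈ {z | GreenH (S : Set U) x z}, ∀ t ∈ {z | GreenH (S : Set U) x z},
        s * x' * t ∈ {z | GreenH (S : Set U) x z}) ∧
     (∀ s ∈ {z | GreenH (S : Set U) x z}, x * x' * s = s ∧ s * x' * x = s) ∧
     (∀ s ∈ {z | GreenH (S : Set U) x z}, ∃ t ∈ {z | GreenH (S : Set U) x z},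
        s * x' * t = x ∧ t * x' * s = x) ∧
     (∀ s t u : U, s * x' * t * x' * u = s * x' * (t * x' * u))) ∧
    -- the map `s|_H ↦ x s` is an isomorphism from the Schützenberger group onto it
    ((∀ o ∈ StabOfH S x, act1 S x o ∈ {z | GreenH (S : Set U) x z}) ∧
     (∀ o ∈ StabOfH S x, ∀ p ∈ StabOfH S x,
        ((∀ y ∈ {z | GreenH (S : Set U) x z}, act1 S y o = act1 S y p) ↔
          act1 S x o = act1 S x p)) ∧
     (∀ g ∈ {z | GreenH (S : Set U) x z}, ∃ o ∈ StabOfH S x, act1 S x o = g) ∧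
     (∀ o ∈ StabOfH S x, ∀ p ∈ StabOfH S x,
        act1 S (act1 S x o) p = act1 S x o * x' * act1 S x p)) := by
  refine ⟨⟨.refl _ x, fun s hs t ht => GreenH.sandwich_mem hx' hs ht,
      fun s hs => ⟨hs.2.sandwich_unit_left hx', hs.1.sandwich_unit_right hx'⟩,
      fun s hs => hs.exists_sandwich_inv hx', fun s t u => by simp only [mul_assoc]⟩,
    fun o ho => act1_mem_of_mem_stabOfH ho,
    fun o _ p _ => ⟨fun h => h x (.refl _ x), fun h y hy => hy.1.act1_eq_act1 h⟩,
    fun g hg => hg.exists_mem_stabOfH_act1_eq,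
    fun o ho p _ => (act1_mem_of_mem_stabOfH ho).1.act1_eq_sandwich hx' p⟩

/-- If `x ∈ S` and `x' ∈ U` satisfies `x x' x = x`, then `H_x^S` is a group
under `s * t := s x' t` with identity `x`, and the map `s|_H ↦ x s` is an
isomorphism from the Schützenberger group of `H_x^S` (the quotient of
`Stab_S(H_x^S)` by the kernel of its right-multiplication action on `H_x^S`)
onto this group. -/
theorem hclass_group_iso_schutzenberger [Semigroup U] [Finite U]
    (S : Subsemigroup U) (x : U) (hx : x ∈ S) (x' : U) (hx' : x * x' * x = x) :
    -- `H_x^S` is a group under `s * t = s x' t` with identity `x`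
    (x ∈ {z | GreenH (S : Set U) x z} ∧
     (∀ s ∈ {z | GreenH (S : Set U) x z}, ∀ t ∈ {z | GreenH (S : Set U) x z},
        s * x' * t ∈ {z | GreenH (S : Set U) x z}) ∧
     (∀ s ∈ {z | GreenH (S : Set U) x z}, x * x' * s = s ∧ s * x' * x = s) ∧
     (∀ s ∈ {z | GreenH (S : Set U) x z}, ∃ t ∈ {z | GreenH (S : Set U) x z},
        s * x' * t = x ∧ t * x' * s = x) ∧
     (∀ s t u : U, s * x' * t * x' * u = s * x' * (t * x' * u))) ∧
    -- the map `s|_H ↦ x s` is an isomorphism from the Schützenberger group onto it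
    ((∀ o ∈ StabOfH S x, act1 S x o ∈ {z | GreenH (S : Set U) x z}) ∧
     (∀ o ∈ StabOfH S x, ∀ p ∈ StabOfH S x,
        ((∀ y ∈ {z | GreenH (S : Set U) x z}, act1 S y o = act1 S y p) ↔
          act1 S x o = act1 S x p)) ∧
     (∀ g ∈ {z | GreenH (S : Set U) x z}, ∃ o ∈ StabOfH S x, act1 S x o = g) ∧
     (∀ o ∈ StabOfH S x, ∀ p ∈ StabOfH S x,
        act1 S (act1 S x o) p = act1 S x o * x' * act1 S x p)) :=
  hclass_group_iso_schutzenberger_general S x x' hx'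
end

section
/- Let U be a finite semigroup, S a subsemigroup, and x, y ∈ S regular in U. If x R^S y, then |R_x^S| = |R_y^S|; moreover |R_x^S| equals the order of the group S_{L_x^U} multiplied by the number of L^U-classes in the strongly connected component of L_x^U under the right action of S on {L_z^U : z ∈ S}. -/
/-!
The `L^U`-classes partition `R_x^S`, and `w R^S x` puts `L_w^U` in the strongly connected
component of `L_x^U`. For `L_z^U` in that component, right translation by an element of `S¹`
carrying `L_x^U` into `L_z^U` is a bijection `R_x^S ∩ L_x^U → R_x^S ∩ L_z^U`. What makes the
translations invertible is finiteness: if `x L^U x s`, some power of `s` fixes `x`, so `x s p = x`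
for some `p ∈ S¹`. Finally, a map induced on `L_x^U` is determined by its value at `x`, and these
values are exactly `R_x^S ∩ L_x^U`; so `|R_x^S|` is the number of classes in the component times
`|S_{L_x^U}|`.
-/

variable {U : Type*}

open Set

theorem Set.ncard_eq_ncard_mul_of_ncard_fiber_eq {α β : Type*} {s : Set α} {t : Set β}
    (f : α → β) {n : ℕ} (hs : s.Finite) (ht : t.Finite) (hf : MapsTo f s t)
    (hn : ∀ b ∈ t, (s ∩ f ⁻¹' {b}).ncard = n) : s.ncard = t.ncard * n := by
  classical
  rw [ncard_eq_toFinset_card s hs, ncard_eq_toFinset_card t ht,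
    Finset.card_eq_sum_card_fiberwise (f := f) (t := ht.toFinset) (by simpa using hf)]
  refine Finset.sum_const_nat fun b hb => ?_
  rw [← hn b (ht.mem_toFinset.1 hb), ← ncard_coe_finset]
  congr 1
  ext a
  simp

section GreenL

variable [Semigroup U]

theorem eq_or_exists_mul_eq_trans {a b c : U}
    (hab : a = b ∨ ∃ u ∈ (univ : Set U), u * a = b)
    (hbc : b = c ∨ ∃ u ∈ (univ : Set U), u * b = c) :
    a = c ∨ ∃ u ∈ (univ : Set U), u * a = c := by
  rcases hab with rfl | ⟨u, -, rfl⟩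
  · exact hbc
  rcases hbc with rfl | ⟨v, -, rfl⟩
  · exact Or.inr ⟨u, trivial, rfl⟩
  · exact Or.inr ⟨v * u, trivial, mul_assoc v u a⟩

theorem greenL_univ_equivalence : Equivalence (GreenL (univ : Set U)) where
  refl _ := ⟨Or.inl rfl, Or.inl rfl⟩
  symm h := ⟨h.2, h.1⟩
  trans hab hbc := ⟨eq_or_exists_mul_eq_trans hab.1 hbc.1, eq_or_exists_mul_eq_trans hbc.2 hab.2⟩

theorem mem_Lcl_self (a : U) : a ∈ Lcl a := greenL_univ_equivalence.refl a

theorem Lcl_eq_Lcl_iff {a b : U} : Lcl a = Lcl b ↔ GreenL univ a b := by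
  refine ⟨fun h => (h ▸ mem_Lcl_self b : b ∈ Lcl a), fun h => ext fun c => ?_⟩
  exact ⟨greenL_univ_equivalence.trans (greenL_univ_equivalence.symm h),
    greenL_univ_equivalence.trans h⟩

theorem preimage_Lcl_singleton (a : U) : Lcl ⁻¹' {Lcl a} = Lcl a :=
  ext fun _ => Lcl_eq_Lcl_iff.trans ⟨greenL_univ_equivalence.symm, greenL_univ_equivalence.symm⟩

theorem GreenL.mul_right_s12 {a b : U} (c : U) (h : GreenL univ a b) :
    GreenL univ (a * c) (b * c) := by
  refine ⟨?_, ?_⟩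
  · rcases h.1 with rfl | ⟨u, -, rfl⟩
    exacts [Or.inl rfl, Or.inr ⟨u, trivial, (mul_assoc u a c).symm⟩]
  · rcases h.2 with rfl | ⟨u, -, rfl⟩
    exacts [Or.inl rfl, Or.inr ⟨u, trivial, (mul_assoc u b c).symm⟩]

end GreenL

theorem GreenR.reachC [Mul U] {T : Set U} {a b : U} (h : GreenR T a b) :
    reachC T a b ∧ reachC T b a :=
  ⟨h.1.imp (congrArg Lcl) fun ⟨c, hc, e⟩ => ⟨c, hc, congrArg Lcl e⟩,
    h.2.imp (congrArg Lcl) fun ⟨c, hc, e⟩ => ⟨c, hc, congrArg Lcl e⟩⟩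

section rightAct

variable [Semigroup U] (S : Subsemigroup U)

/-- `act1` with `S¹` typed as the monoid `WithOne ↥S` (definitionally `Option ↥S`), so that
products and powers in `S¹` can be written. -/
def rightAct (u : U) (o : WithOne ↥S) : U := act1 S u o

@[simp]
theorem rightAct_one (u : U) : rightAct S u 1 = u := rfl

@[simp]
theorem rightAct_coe (u : U) (s : ↥S) : rightAct S u s = u * s := rfl

theorem rightAct_mul (u : U) (o p : WithOne ↥S) :
    rightAct S u (o * p) = rightAct S (rightAct S u o) p := by
  induction o using WithOne.cases_on <;> induction p using WithOne.cases_on <;>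
    simp [← WithOne.coe_mul, mul_assoc]

theorem mul_rightAct (u v : U) (o : WithOne ↥S) : u * rightAct S v o = rightAct S (u * v) o := by
  induction o using WithOne.cases_on <;> simp [mul_assoc]

theorem exists_rightAct_iff (P : U → Prop) (a : U) :
    (∃ o, P (rightAct S a o)) ↔ P a ∨ ∃ s ∈ (S : Set U), P (a * s) := by
  simp [WithOne.exists]

variable {S}

theorem GreenL.rightAct {a b : U} (o : WithOne ↥S) (h : GreenL univ a b) :
    GreenL univ (rightAct S a o) (rightAct S b o) := by
  induction o using WithOne.cases_on
  exacts [h, fun _ => h.mul_right_s12 _]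

theorem rightAct_eqOn_Lcl {x : U} {o p : WithOne ↥S} (h : rightAct S x o = rightAct S x p) :
    EqOn (rightAct S · o) (rightAct S · p) (Lcl x) := by
  intro z hz
  rcases hz.1 with rfl | ⟨u, -, rfl⟩
  · exact h
  · simp only [← mul_rightAct, h]

theorem rightAct_eq_self_of_mem_Lcl {x z : U} {q : WithOne ↥S} (hq : rightAct S x q = x)
    (hz : z ∈ Lcl x) : rightAct S z q = z :=
  rightAct_eqOn_Lcl (p := 1) hq hz

theorem leftInvOn_rightAct {x : U} {o p : WithOne ↥S} (h : rightAct S (rightAct S x o) p = x) :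
    LeftInvOn (rightAct S · p) (rightAct S · o) (Lcl x) := fun _ hz => by
  dsimp only
  rw [← rightAct_mul] at h ⊢
  exact rightAct_eq_self_of_mem_Lcl h hz

theorem rightAct_pow_mem_Lcl {x : U} {o : WithOne ↥S} (h : GreenL univ x (rightAct S x o))
    (n : ℕ) : rightAct S x (o ^ n) ∈ Lcl x := by
  induction n with
  | zero => exact mem_Lcl_self x
  | succ n ih =>
    rw [pow_succ, rightAct_mul]
    exact greenL_univ_equivalence.trans h (ih.rightAct o)

/-- The orbit `x oⁿ` stays in `L_x`, so by finiteness some power fixes one of its points;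
since right actions commute with left multiplication, that power then fixes all of `L_x`. -/
theorem exists_rightAct_pow_succ_eq_self [Finite U] {x : U} {o : WithOne ↥S}
    (h : GreenL univ x (rightAct S x o)) : ∃ k, rightAct S x (o ^ (k + 1)) = x := by
  obtain ⟨m, n, hmn, he⟩ := finite_univ.exists_lt_map_eq_of_forall_mem
    (f := fun n => rightAct S x (o ^ n)) fun _ => mem_univ _
  obtain ⟨k, rfl⟩ := Nat.exists_eq_add_of_lt hmn
  have hfix : rightAct S (rightAct S x (o ^ m)) (o ^ (k + 1)) = rightAct S x (o ^ m) := by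
    rw [← rightAct_mul, ← pow_add]
    exact he.symm
  exact ⟨k, rightAct_eq_self_of_mem_Lcl hfix
    (greenL_univ_equivalence.symm (rightAct_pow_mem_Lcl h m))⟩

theorem exists_rightAct_rightAct_eq_self [Finite U] {x : U} {o : WithOne ↥S}
    (h : GreenL univ x (rightAct S x o)) : ∃ p, rightAct S (rightAct S x o) p = x := by
  obtain ⟨k, hk⟩ := exists_rightAct_pow_succ_eq_self h
  exact ⟨o ^ k, by rw [← rightAct_mul, ← pow_succ', hk]⟩

end rightAct

section GreenR

variable [Semigroup U] {S : Subsemigroup U}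

theorem range_rightAct_subset {a b : U} (h : b ∈ range (rightAct S a)) :
    range (rightAct S b) ⊆ range (rightAct S a) := by
  obtain ⟨o, rfl⟩ := h
  rintro _ ⟨p, rfl⟩
  exact ⟨o * p, rightAct_mul S a o p⟩

theorem greenR_iff_range_rightAct_eq {a b : U} :
    GreenR (S : Set U) a b ↔ range (rightAct S a) = range (rightAct S b) := by
  have mem_range_iff (a b : U) :
      b ∈ range (rightAct S a) ↔ a = b ∨ ∃ c ∈ (S : Set U), a * c = b :=
    exists_rightAct_iff S (· = b) a
  rw [GreenR, ← mem_range_iff, ← mem_range_iff]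
  refine ⟨fun ⟨hab, hba⟩ => (range_rightAct_subset hba).antisymm (range_rightAct_subset hab),
    fun h => ⟨?_, ?_⟩⟩
  · exact h.symm ▸ (⟨1, rfl⟩ : b ∈ range (rightAct S b))
  · exact h ▸ (⟨1, rfl⟩ : a ∈ range (rightAct S a))

theorem range_rightAct_rightAct_eq {a : U} {o p : WithOne ↥S}
    (h : rightAct S (rightAct S a o) p = a) :
    range (rightAct S (rightAct S a o)) = range (rightAct S a) :=
  (range_rightAct_subset ⟨o, rfl⟩).antisymm (range_rightAct_subset ⟨p, h⟩)

theorem Rcl_eq_of_greenR {x y : U} (h : GreenR (S : Set U) x y) :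
    Rcl (S : Set U) x = Rcl (S : Set U) y := by
  ext w
  change GreenR _ x w ↔ GreenR _ y w
  rw [greenR_iff_range_rightAct_eq, greenR_iff_range_rightAct_eq, greenR_iff_range_rightAct_eq.1 h]

theorem GreenR.mem_of_mem {x w : U} (h : GreenR (S : Set U) x w) (hx : x ∈ S) : w ∈ S := by
  rcases h.1 with rfl | ⟨c, hc, rfl⟩
  exacts [hx, S.mul_mem hx hc]

theorem reachC_iff {a b : U} :
    reachC (S : Set U) a b ↔ ∃ o, Lcl (rightAct S a o) = Lcl b :=
  (exists_rightAct_iff S (Lcl · = Lcl b) a).symm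

end GreenR

section Finite

variable [Semigroup U] [Finite U] {S : Subsemigroup U}

theorem mem_StabOfL_iff {x : U} {o : WithOne ↥S} : o ∈ StabOfL S x ↔ rightAct S x o ∈ Lcl x := by
  change (rightAct S · o) '' Lcl x = Lcl x ↔ _
  refine ⟨fun h => h ▸ mem_image_of_mem _ (mem_Lcl_self x), fun h => ?_⟩
  obtain ⟨p, hp⟩ := exists_rightAct_rightAct_eq_self h
  have hmaps : MapsTo (rightAct S · o) (Lcl x) (Lcl x) := fun _ hz =>
    greenL_univ_equivalence.trans h (hz.rightAct o)
  exact (((toFinite _).injOn_iff_bijOn_of_mapsTo hmaps).1 (leftInvOn_rightAct hp).injOn).image_eq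

theorem greenR_rightAct_of_greenL {x : U} {o : WithOne ↥S} (h : GreenL univ x (rightAct S x o)) :
    GreenR (S : Set U) x (rightAct S x o) := by
  obtain ⟨p, hp⟩ := exists_rightAct_rightAct_eq_self h
  exact greenR_iff_range_rightAct_eq.2 (range_rightAct_rightAct_eq hp).symm

theorem image_StabOfL (x : U) : (act1 S x ·) '' StabOfL S x = Rcl (S : Set U) x ∩ Lcl x := by
  ext w
  constructor
  · rintro ⟨o, ho, rfl⟩
    have hL := mem_StabOfL_iff.1 ho
    exact ⟨greenR_rightAct_of_greenL hL, hL⟩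
  · rintro ⟨hR, hL⟩
    obtain ⟨o, rfl⟩ : w ∈ range (rightAct S x) :=
      greenR_iff_range_rightAct_eq.1 hR ▸ (⟨1, rfl⟩ : w ∈ range (rightAct S w))
    exact ⟨o, mem_StabOfL_iff.2 hL, rfl⟩

theorem ncard_image_StabOfL (x : U) :
    ((fun (o : Option ↥S) => fun (z : ↥(Lcl x)) => act1 S (z : U) o) '' StabOfL S x).ncard =
      (Rcl (S : Set U) x ∩ Lcl x).ncard := by
  set ev := fun g : ↥(Lcl x) → U => g ⟨x, mem_Lcl_self x⟩
  have hinj : InjOn ev ((fun (o : Option ↥S) => fun (z : ↥(Lcl x)) => act1 S (z : U) o) ''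
      StabOfL S x) := by
    rintro _ ⟨o, -, rfl⟩ _ ⟨p, -, rfl⟩ h
    funext ⟨z, hz⟩
    exact rightAct_eqOn_Lcl h hz
  rw [← hinj.ncard_image, image_image, ← image_StabOfL]

theorem ncard_Rcl_inter_Lcl_le {x y : U} {o r : WithOne ↥S} (hy : rightAct S x o = y)
    (hx : rightAct S y r = x) :
    (Rcl (S : Set U) x ∩ Lcl x).ncard ≤ (Rcl (S : Set U) y ∩ Lcl y).ncard := by
  subst hy
  have hinv := leftInvOn_rightAct hx
  refine ncard_le_ncard_of_injOn (rightAct S · o) ?_ (hinv.injOn.mono inter_subset_right)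
  rintro v ⟨hvR, hvL⟩
  refine ⟨?_, hvL.rightAct o⟩
  change GreenR _ _ _ at hvR ⊢
  rw [greenR_iff_range_rightAct_eq] at hvR ⊢
  rw [range_rightAct_rightAct_eq hx, hvR, range_rightAct_rightAct_eq (hinv hvL)]

theorem ncard_Rcl_inter_Lcl_eq_of_reachC {x z : U} (hxz : reachC (S : Set U) x z)
    (hzx : reachC (S : Set U) z x) :
    (Rcl (S : Set U) x ∩ Lcl z).ncard = (Rcl (S : Set U) x ∩ Lcl x).ncard := by
  obtain ⟨o, ho⟩ := reachC_iff.1 hxz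
  obtain ⟨t, ht⟩ := reachC_iff.1 hzx
  set y := rightAct S x o
  have hyt : GreenL univ x (rightAct S x (o * t)) := by
    rw [rightAct_mul, ← Lcl_eq_Lcl_iff, ← ht, Lcl_eq_Lcl_iff]
    exact greenL_univ_equivalence.symm ((Lcl_eq_Lcl_iff.1 ho).rightAct t)
  obtain ⟨p, hp⟩ := exists_rightAct_rightAct_eq_self hyt
  have hx : rightAct S y (t * p) = x := by
    rw [rightAct_mul, ← rightAct_mul S x o t]
    exact hp
  have hR : Rcl (S : Set U) x = Rcl (S : Set U) y :=
    Rcl_eq_of_greenR (greenR_iff_range_rightAct_eq.2 (range_rightAct_rightAct_eq hx).symm)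
  calc (Rcl (S : Set U) x ∩ Lcl z).ncard = (Rcl (S : Set U) y ∩ Lcl y).ncard := by
        rw [← ho, hR]
    _ = (Rcl (S : Set U) x ∩ Lcl x).ncard :=
        le_antisymm (ncard_Rcl_inter_Lcl_le hx rfl) (ncard_Rcl_inter_Lcl_le rfl hx)

end Finite

theorem card_rclass_eq_general [Semigroup U] [Finite U] (S : Subsemigroup U)
    (x y : U) (hx : x ∈ S) :
    (GreenR (S : Set U) x y → (Rcl (S : Set U) x).ncard = (Rcl (S : Set U) y).ncard) ∧
    (Rcl (S : Set U) x).ncard =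
      ((fun (o : Option ↥S) => fun (z : ↥(Lcl x)) => act1 S (z : U) o) ''
          StabOfL S x).ncard *
        {B : Set U | ∃ z ∈ (S : Set U), B = Lcl z ∧
          reachC (S : Set U) x z ∧ reachC (S : Set U) z x}.ncard := by
  refine ⟨fun hxy => by rw [Rcl_eq_of_greenR hxy], ?_⟩
  rw [ncard_image_StabOfL, mul_comm]
  refine ncard_eq_ncard_mul_of_ncard_fiber_eq Lcl (toFinite _) (toFinite _) ?_ ?_
  · intro w hw
    exact ⟨w, hw.mem_of_mem hx, rfl, hw.reachC⟩
  · rintro _ ⟨z, -, rfl, hxz, hzx⟩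
    rw [preimage_Lcl_singleton]
    exact ncard_Rcl_inter_Lcl_eq_of_reachC hxz hzx

/-- For `x, y ∈ S` regular in `U`: if `x R^S y` then `|R_x^S| = |R_y^S|`;
moreover `|R_x^S|` equals the order of the group `S_{L_x^U}` (realised as the
set of maps induced on `L_x^U` by the stabiliser `Stab_S(L_x^U)`) multiplied by
the number of `L^U`-classes in the strongly connected component of `L_x^U` under
the right action of `S` on `{L_z^U : z ∈ S}`. -/
theorem card_rclass_eq [Semigroup U] [Finite U] (S : Subsemigroup U)
    (x y : U) (hx : x ∈ S) (hy : y ∈ S)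
    (hxreg : ∃ x' : U, x * x' * x = x) (hyreg : ∃ y' : U, y * y' * y = y) :
    (GreenR (S : Set U) x y → (Rcl (S : Set U) x).ncard = (Rcl (S : Set U) y).ncard) ∧
    (Rcl (S : Set U) x).ncard =
      ((fun (o : Option ↥S) => fun (z : ↥(Lcl x)) => act1 S (z : U) o) ''
          StabOfL S x).ncard *
        {B : Set U | ∃ z ∈ (S : Set U), B = Lcl z ∧
          reachC (S : Set U) x z ∧ reachC (S : Set U) z x}.ncard :=
  card_rclass_eq_general S x y hx
end
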